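/- Define g_t(y) = (2/√(2πt)) · exp(−y²/(2t)) for t > 0 and y ∈ ℝ. Then for all reals 0 < t_1 < t_2, y_1 ≥ 0, y_2 ≥ 0 and z ≤ y_1, one has g_{t_2−t_1}(y_2 − z) ≤ √(t_2/(t_2−t_1)) · g_{t_2}(y_2) · exp( y_1 y_2 / (t_2−t_1) ). -/

import Mathlib

/-- `g t y = (2/√(2πt)) exp(−y²/(2t))`, the density of the running maximum of a standard
Brownian motion at time `t` (for `y ≥ 0`). -/
noncomputable def g (t y : ℝ) : ℝ :=
  (2 / Real.sqrt (2 * Real.pi * t)) * Real.exp (-(y ^ 2) / (2 * t))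

/-!
Change the time of `g` from `t₂ - t₁` to `t₂`: the normalising constants differ by the factor
`√(t₂/(t₂−t₁))`, and the exponents by `y₂²/(2t₂) − (y₂−z)²/(2(t₂−t₁))`, which is at most
`y₂²/(2(t₂−t₁)) − (y₂−z)²/(2(t₂−t₁)) ≤ z y₂/(t₂−t₁) ≤ y₁ y₂/(t₂−t₁)`.
-/

open Real

lemma two_div_sqrt_two_pi_mul_eq {s t : ℝ} (hs : 0 < s) (ht : 0 < t) :
    2 / √(2 * π * s) = √(t / s) * (2 / √(2 * π * t)) := by
  have hπ : 0 < 2 * π := by positivity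
  rw [sqrt_div ht.le, sqrt_mul hπ.le, sqrt_mul hπ.le]
  have := sqrt_pos.mpr hπ
  have := sqrt_pos.mpr hs
  have := sqrt_pos.mpr ht
  field_simp

lemma g_eq_sqrt_div_mul_g_mul_exp {s t : ℝ} (hs : 0 < s) (ht : 0 < t) (y y' : ℝ) :
    g s y = √(t / s) * g t y' * exp (y' ^ 2 / (2 * t) - y ^ 2 / (2 * s)) := by
  rw [g, g, two_div_sqrt_two_pi_mul_eq hs ht]
  simp only [mul_assoc, ← exp_add]
  ring_nf

lemma sq_div_sub_sq_div_le {s t y z w : ℝ} (hs : 0 < s) (hst : s ≤ t) (hy : 0 ≤ y)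
    (hzw : z ≤ w) : y ^ 2 / (2 * t) - (y - z) ^ 2 / (2 * s) ≤ w * y / s := by
  calc y ^ 2 / (2 * t) - (y - z) ^ 2 / (2 * s)
      ≤ y ^ 2 / (2 * s) - (y - z) ^ 2 / (2 * s) := by gcongr
    _ = z * y / s - z ^ 2 / (2 * s) := by field_simp; ring
    _ ≤ w * y / s := by
      have : 0 ≤ z ^ 2 / (2 * s) := by positivity
      have : z * y / s ≤ w * y / s := by gcongr
      linarith

theorem statement17_general (t₁ t₂ y₁ y₂ z : ℝ) (ht₁ : 0 < t₁) (ht : t₁ < t₂)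
    (hy₂ : 0 ≤ y₂) (hz : z ≤ y₁) :
    g (t₂ - t₁) (y₂ - z)
      ≤ Real.sqrt (t₂ / (t₂ - t₁)) * g t₂ y₂ * Real.exp (y₁ * y₂ / (t₂ - t₁)) := by
  have hs : 0 < t₂ - t₁ := sub_pos.mpr ht
  have ht₂ : 0 < t₂ := ht₁.trans ht
  rw [g_eq_sqrt_div_mul_g_mul_exp hs ht₂ (y₂ - z) y₂]
  have hg : 0 ≤ g t₂ y₂ := by unfold g; positivity
  gcongr
  exact sq_div_sub_sq_div_le hs (by linarith) hy₂ hz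

/-- For all reals `0 < t₁ < t₂`, `y₁ ≥ 0`, `y₂ ≥ 0` and `z ≤ y₁`,
`g (t₂−t₁) (y₂−z) ≤ √(t₂/(t₂−t₁)) · g t₂ y₂ · exp(y₁ y₂/(t₂−t₁))`. -/
theorem statement17 (t₁ t₂ y₁ y₂ z : ℝ) (ht₁ : 0 < t₁) (ht : t₁ < t₂)
    (hy₁ : 0 ≤ y₁) (hy₂ : 0 ≤ y₂) (hz : z ≤ y₁) :
    g (t₂ - t₁) (y₂ - z)
      ≤ Real.sqrt (t₂ / (t₂ - t₁)) * g t₂ y₂ * Real.exp (y₁ * y₂ / (t₂ - t₁)) :=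
  statement17_general t₁ t₂ y₁ y₂ z ht₁ ht hy₂ hz
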